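/- General regret bound via information ratios: Let χ, ℰ be random variables, (P_t)_{t≥0} a sequence of random variables (epistemic states) such that t ↦ I(χ; ℰ | P_t) is nonincreasing with I(χ; ℰ | P₀) = I(χ; ℰ). Suppose per-step expected shortfalls d_t ≥ 0 satisfy, for some τ ∈ ℤ₊₊ and ε_t ≥ 0, (max(d_t − ε_t, 0))² ≤ Γ_t · (I(χ; ℰ | P_t) − I(χ; ℰ | P_{t+τ}))/τ for all t < T, where Γ_t ≥ 0. Then Σ_{t=0}^{T−1} d_t ≤ √(I(χ; ℰ) · Σ_{t=0}^{T−1} Γ_t) + Σ_{t=0}^{T−1} ε_t. -/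

import Mathlib

/-!
Split each shortfall as `d t ≤ (d t - ε t)₊ + ε t`. By the hypothesis and Cauchy–Schwarz,
`Σ (d t - ε t)₊ ≤ √(Σ Γ t · Σ Δ t)` with `Δ t = (I t - I (t + τ)) / τ`, and the lagged sum
`Σ_{t<T} (I t - I (t + τ))` telescopes to `Σ_{t<τ} (I t - I (t + T)) ≤ τ · I 0`, so `Σ Δ t ≤ I 0`.
-/

open Finset

theorem Finset.sum_range_sub_shift {G : Type*} [AddCommGroup G] (f : ℕ → G) (T τ : ℕ) :
    ∑ t ∈ range T, (f t - f (t + τ)) = ∑ t ∈ range τ, (f t - f (t + T)) := by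
  have h₁ := sum_range_add f T τ
  have h₂ := sum_range_add f τ T
  rw [add_comm τ T] at h₂
  simp only [sum_sub_distrib, add_comm _ T, add_comm _ τ]
  rw [sub_eq_sub_iff_add_eq_add]
  exact h₁.symm.trans h₂

namespace Antitone

variable {I : ℕ → ℝ}

theorem sum_range_sub_shift_le (hI : Antitone I) (hI₀ : ∀ t, 0 ≤ I t) (T τ : ℕ) :
    ∑ t ∈ range T, (I t - I (t + τ)) ≤ τ * I 0 := by
  rw [sum_range_sub_shift]
  calc ∑ t ∈ range τ, (I t - I (t + T)) ≤ ∑ _t ∈ range τ, I 0 :=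
        sum_le_sum fun t _ => by linarith [hI (Nat.zero_le t), hI₀ (t + T)]
    _ = τ * I 0 := by rw [sum_const, card_range, nsmul_eq_mul]

theorem sum_range_sub_shift_div_le (hI : Antitone I) (hI₀ : ∀ t, 0 ≤ I t) (T τ : ℕ) :
    ∑ t ∈ range T, (I t - I (t + τ)) / τ ≤ I 0 := by
  rw [← sum_div]
  exact div_le_of_le_mul₀ τ.cast_nonneg (hI₀ 0) <| by
    simpa only [mul_comm] using hI.sum_range_sub_shift_le hI₀ T τ

end Antitone

theorem Real.sum_le_sqrt_mul_of_sq_le_mul {ι : Type*} (s : Finset ι) {a f g : ι → ℝ}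
    (hf : ∀ i, 0 ≤ f i) (hg : ∀ i, 0 ≤ g i) (h : ∀ i ∈ s, a i ^ 2 ≤ f i * g i) :
    ∑ i ∈ s, a i ≤ √((∑ i ∈ s, f i) * ∑ i ∈ s, g i) := by
  calc ∑ i ∈ s, a i ≤ ∑ i ∈ s, √(f i) * √(g i) := sum_le_sum fun i hi => by
        rw [← Real.sqrt_mul (hf i)]
        exact Real.le_sqrt_of_sq_le (h i hi)
    _ ≤ √(∑ i ∈ s, f i) * √(∑ i ∈ s, g i) := Real.sum_sqrt_mul_sqrt_le s hf hg
    _ = √((∑ i ∈ s, f i) * ∑ i ∈ s, g i) := (Real.sqrt_mul (sum_nonneg fun i _ => hf i) _).symm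

theorem regret_bound_info_ratio_general (T τ : ℕ)
    (I : ℕ → ℝ) (hInonneg : ∀ t, 0 ≤ I t) (hImono : ∀ m n : ℕ, m ≤ n → I n ≤ I m)
    (d ε Γ : ℕ → ℝ) (hΓ : ∀ t, 0 ≤ Γ t)
    (hratio : ∀ t < T, (max (d t - ε t) 0) ^ 2 ≤ Γ t * ((I t - I (t + τ)) / τ)) :
    ∑ t ∈ Finset.range T, d t ≤
      Real.sqrt (I 0 * ∑ t ∈ Finset.range T, Γ t) + ∑ t ∈ Finset.range T, ε t := by
  have hI : Antitone I := fun m n hmn => hImono m n hmn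
  have hΔ : ∀ t, 0 ≤ (I t - I (t + τ)) / τ := fun t =>
    div_nonneg (sub_nonneg.2 (hI (Nat.le_add_right t τ))) τ.cast_nonneg
  have hpos : ∑ t ∈ range T, max (d t - ε t) 0 ≤ √(I 0 * ∑ t ∈ range T, Γ t) :=
    calc ∑ t ∈ range T, max (d t - ε t) 0
        ≤ √((∑ t ∈ range T, Γ t) * ∑ t ∈ range T, (I t - I (t + τ)) / τ) :=
          Real.sum_le_sqrt_mul_of_sq_le_mul _ hΓ hΔ fun t ht => hratio t (mem_range.1 ht)
      _ ≤ √(I 0 * ∑ t ∈ range T, Γ t) := Real.sqrt_le_sqrt <| by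
          rw [mul_comm (I 0)]
          exact mul_le_mul_of_nonneg_left (hI.sum_range_sub_shift_div_le hInonneg T τ)
            (sum_nonneg fun t _ => hΓ t)
  calc ∑ t ∈ range T, d t ≤ ∑ t ∈ range T, (max (d t - ε t) 0 + ε t) :=
        sum_le_sum fun t _ => by linarith [le_max_left (d t - ε t) 0]
    _ ≤ √(I 0 * ∑ t ∈ range T, Γ t) + ∑ t ∈ range T, ε t := by
        rw [sum_add_distrib]; linarith

/-- General regret bound via (τ, ε)-information ratios.  Here `I t` plays the role
of the conditional mutual information `𝕀(χ; ℰ | P_t)` (nonnegative, nonincreasing,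
with `I 0 = 𝕀(χ; ℰ)`), `d t` the per-step expected shortfall, `ε t` the tolerance,
and `Γ t` the information ratio.  Then
`Σ_{t<T} d t ≤ √(I 0 · Σ_{t<T} Γ t) + Σ_{t<T} ε t`. -/
theorem regret_bound_info_ratio (T τ : ℕ) (hτ : 0 < τ)
    (I : ℕ → ℝ) (hInonneg : ∀ t, 0 ≤ I t) (hImono : ∀ m n : ℕ, m ≤ n → I n ≤ I m)
    (d ε Γ : ℕ → ℝ) (hd : ∀ t, 0 ≤ d t) (hε : ∀ t, 0 ≤ ε t) (hΓ : ∀ t, 0 ≤ Γ t)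
    (hratio : ∀ t < T, (max (d t - ε t) 0) ^ 2 ≤ Γ t * ((I t - I (t + τ)) / τ)) :
    ∑ t ∈ Finset.range T, d t ≤
      Real.sqrt (I 0 * ∑ t ∈ Finset.range T, Γ t) + ∑ t ∈ Finset.range T, ε t :=
  regret_bound_info_ratio_general T τ I hInonneg hImono d ε Γ hΓ hratio
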